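/- arXiv:1310.6993 — 3 statements merged into one kernel-verified Lean document; each statement's English description precedes it below -/
import Mathlib

section
/- Let k > 0, let n₀ and N be positive integers, let a₁, a₂, a₃ > 0, and let (ξ_n), (η_n), (ζ_n) be sequences of positive real numbers such that ξ_n ≤ ξ_{n−1}(1 + k·η_{n−1}) + k·ζ_n for all n ≥ n₀, and such that for every integer k₀ ≥ n₀ one has Σ_{n=k₀}^{N+k₀} k·η_n ≤ a₁, Σ_{n=k₀}^{N+k₀} k·ζ_n ≤ a₂, and Σ_{n=k₀}^{N+k₀} k·ξ_n ≤ a₃. Then ξ_n ≤ (a₃/(N·k) + a₂)·e^{a₁} for all n ≥ N + n₀. -/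
/-!
Among the `N` indices of the window `[n - N, n)` some `m` has `k ξ m ≤ a₃ / N`, since the window
sum of `k ξ` is at most `a₃`. Iterating the recursion from `m` to `n` bounds `ξ n` by
`(ξ m + ∑ k ζ) ∏ (1 + k η)`; the window bounds control the sum by `a₂` and, via `1 + x ≤ eˣ`,
the product by `exp a₁`.
-/

open Finset

theorem Finset.exists_le_div_card_of_sum_le {ι 𝕜 : Type*} [Field 𝕜] [LinearOrder 𝕜]
    [IsStrictOrderedRing 𝕜] {s : Finset ι} (hs : s.Nonempty) {f : ι → 𝕜} {a : 𝕜}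
    (h : ∑ i ∈ s, f i ≤ a) : ∃ i ∈ s, f i ≤ a / #s := by
  refine exists_le_of_sum_le hs (h.trans_eq ?_)
  rw [sum_const, nsmul_eq_mul, mul_div_cancel₀]
  exact_mod_cast hs.card_ne_zero

theorem le_mul_prod_of_le_mul_one_add_add {R : Type*} [CommRing R] [LinearOrder R]
    [IsStrictOrderedRing R] {x b c : ℕ → R} {m n : ℕ} (hb : ∀ j, 0 ≤ b j) (hc : ∀ j, 0 ≤ c j)
    (hx : ∀ j, m ≤ j → x (j + 1) ≤ x j * (1 + b j) + c (j + 1)) (hmn : m ≤ n) :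
    x n ≤ (x m + ∑ j ∈ Ioc m n, c j) * ∏ j ∈ Ico m n, (1 + b j) := by
  induction n, hmn using Nat.le_induction with
  | base => simp
  | succ n hmn ih =>
    have hprod : 1 ≤ (∏ j ∈ Ico m n, (1 + b j)) * (1 + b n) := by
      rw [← prod_Ico_succ_top hmn (fun j ↦ 1 + b j)]
      exact one_le_prod fun j _ ↦ le_add_of_nonneg_right (hb j)
    rw [sum_Ioc_succ_top hmn, prod_Ico_succ_top hmn]
    calc x (n + 1) ≤ x n * (1 + b n) + c (n + 1) := hx n hmn
      _ ≤ (x m + ∑ j ∈ Ioc m n, c j) * (∏ j ∈ Ico m n, (1 + b j)) * (1 + b n)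
          + c (n + 1) * ((∏ j ∈ Ico m n, (1 + b j)) * (1 + b n)) := by
        gcongr
        · exact add_nonneg zero_le_one (hb n)
        · exact le_mul_of_one_le_right (hc _) hprod
      _ = _ := by ring

theorem discrete_uniform_gronwall_general (k : ℝ) (hk : 0 < k) (n₀ N : ℕ)
    (hN : 0 < N)
    (a₁ a₂ a₃ : ℝ)
    (ξ η ζ : ℕ → ℝ) (hξ : ∀ n, 0 < ξ n) (hη : ∀ n, 0 < η n) (hζ : ∀ n, 0 < ζ n)
    (hrec : ∀ n, n₀ ≤ n → ξ n ≤ ξ (n - 1) * (1 + k * η (n - 1)) + k * ζ n)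
    (hη' : ∀ k₀, n₀ ≤ k₀ → ∑ n ∈ Finset.Icc k₀ (N + k₀), k * η n ≤ a₁)
    (hζ' : ∀ k₀, n₀ ≤ k₀ → ∑ n ∈ Finset.Icc k₀ (N + k₀), k * ζ n ≤ a₂)
    (hξ' : ∀ k₀, n₀ ≤ k₀ → ∑ n ∈ Finset.Icc k₀ (N + k₀), k * ξ n ≤ a₃) :
    ∀ n, N + n₀ ≤ n → ξ n ≤ (a₃ / (N * k) + a₂) * Real.exp a₁ := by
  intro n hn
  obtain ⟨m₀, rfl⟩ : ∃ m₀, n = N + m₀ := ⟨n - N, by omega⟩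
  have hm₀ : n₀ ≤ m₀ := by omega
  have window : ∀ f : ℕ → ℝ, (∀ j, 0 < f j) → ∀ s ⊆ Icc m₀ (N + m₀),
      ∑ j ∈ s, k * f j ≤ ∑ j ∈ Icc m₀ (N + m₀), k * f j :=
    fun f hf s hs ↦ sum_le_sum_of_subset_of_nonneg hs fun j _ _ ↦ (mul_pos hk (hf j)).le
  obtain ⟨m, hm, hξm⟩ : ∃ m ∈ Ico m₀ (N + m₀), k * ξ m ≤ a₃ / N := by
    simpa using exists_le_div_card_of_sum_le (nonempty_Ico.2 (by omega))
      ((window ξ hξ _ Ico_subset_Icc_self).trans (hξ' m₀ hm₀))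
  obtain ⟨hm₀m, hmn⟩ := mem_Ico.1 hm
  have hsub : Icc m (N + m₀) ⊆ Icc m₀ (N + m₀) := Icc_subset_Icc hm₀m le_rfl
  have hζsum : ∑ j ∈ Ioc m (N + m₀), k * ζ j ≤ a₂ :=
    (window ζ hζ _ (Ioc_subset_Icc_self.trans hsub)).trans (hζ' m₀ hm₀)
  have hηprod : ∏ j ∈ Ico m (N + m₀), (1 + k * η j) ≤ Real.exp a₁ :=
    (Real.prod_one_add_le_exp_sum _ fun j ↦ (mul_pos hk (hη j)).le).trans <| Real.exp_le_exp.2 <|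
      (window η hη _ (Ico_subset_Icc_self.trans hsub)).trans (hη' m₀ hm₀)
  have hξstart : ξ m ≤ a₃ / (N * k) := by
    rwa [← div_div, le_div_iff₀ hk, mul_comm]
  have hgronwall := le_mul_prod_of_le_mul_one_add_add (x := ξ) (b := fun j ↦ k * η j)
    (c := fun j ↦ k * ζ j) (fun j ↦ (mul_pos hk (hη j)).le) (fun j ↦ (mul_pos hk (hζ j)).le)
    (fun j hj ↦ by simpa using hrec (j + 1) (by omega)) hmn.le
  have hcoeff : ξ m + ∑ j ∈ Ioc m (N + m₀), k * ζ j ≤ a₃ / (N * k) + a₂ :=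
    add_le_add hξstart hζsum
  have hcoeff_nonneg : 0 ≤ ξ m + ∑ j ∈ Ioc m (N + m₀), k * ζ j :=
    add_nonneg (hξ m).le (sum_nonneg fun j _ ↦ (mul_pos hk (hζ j)).le)
  exact hgronwall.trans <| mul_le_mul hcoeff hηprod
    (prod_nonneg fun j _ ↦ add_nonneg zero_le_one (mul_pos hk (hη j)).le)
    (hcoeff_nonneg.trans hcoeff)

/-- **Discrete uniform Gronwall lemma** (Lemma 4 of the paper). -/
theorem discrete_uniform_gronwall (k : ℝ) (hk : 0 < k) (n₀ N : ℕ)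
    (hn₀ : 0 < n₀) (hN : 0 < N)
    (a₁ a₂ a₃ : ℝ) (ha₁ : 0 < a₁) (ha₂ : 0 < a₂) (ha₃ : 0 < a₃)
    (ξ η ζ : ℕ → ℝ) (hξ : ∀ n, 0 < ξ n) (hη : ∀ n, 0 < η n) (hζ : ∀ n, 0 < ζ n)
    (hrec : ∀ n, n₀ ≤ n → ξ n ≤ ξ (n - 1) * (1 + k * η (n - 1)) + k * ζ n)
    (hη' : ∀ k₀, n₀ ≤ k₀ → ∑ n ∈ Finset.Icc k₀ (N + k₀), k * η n ≤ a₁)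
    (hζ' : ∀ k₀, n₀ ≤ k₀ → ∑ n ∈ Finset.Icc k₀ (N + k₀), k * ζ n ≤ a₂)
    (hξ' : ∀ k₀, n₀ ≤ k₀ → ∑ n ∈ Finset.Icc k₀ (N + k₀), k * ξ n ≤ a₃) :
    ∀ n, N + n₀ ≤ n → ξ n ≤ (a₃ / (N * k) + a₂) * Real.exp a₁ :=
  discrete_uniform_gronwall_general k hk n₀ N hN a₁ a₂ a₃ ξ η ζ hξ hη hζ hrec hη' hζ' hξ'
end

section
/- Let g : ℝ → ℝ be continuously differentiable and suppose there exist γ > 0 and R > 0 such that g'(r) ≥ γ whenever |r| ≥ R. Then there exist constants c⋆ > 0 and C ≥ 0 such that g(r)·r ≥ (c⋆/2)·|g(r)|·(1 + |r|) − C for all r ∈ ℝ. -/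
/-!
Away from `[-R, R]` the function `r ↦ g r - γ r` is nondecreasing, so `g` tends to `±∞` at
`±∞`. Hence for `|r|` large `g r` has the sign of `r`, and there
`g r * r = |g r| * |r| ≥ ½ |g r| (1 + |r|)`; on the remaining compact interval the defect
is bounded by continuity. This gives the estimate with `c⋆ = 1`.
-/

open Filter Set

theorem tendsto_atTop_of_le_deriv {f : ℝ → ℝ} {a γ : ℝ} (hγ : 0 < γ)
    (hf : ContinuousOn f (Ici a)) (hderiv : ∀ x ∈ Ioi a, γ ≤ deriv f x) :
    Tendsto f atTop atTop := by
  -- `deriv f x = 0` where `f` is not differentiable, so `γ ≤ deriv f x` forces it.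
  have hdiff : DifferentiableOn ℝ f (interior (Ici a)) := fun x hx =>
    (differentiableAt_of_deriv_ne_zero
      (hγ.trans_le (hderiv x (by rwa [interior_Ici] at hx))).ne').differentiableWithinAt
  have hlin : ∀ᶠ x in atTop, f a + γ * (x - a) ≤ f x := by
    filter_upwards [eventually_ge_atTop a] with x hx
    have := (convex_Ici a).mul_sub_le_image_sub_of_le_deriv hf hdiff
      (fun y hy => hderiv y (by rwa [interior_Ici] at hy)) a self_mem_Ici x hx hx
    linarith
  refine tendsto_atTop_mono' _ hlin (tendsto_atTop_add_const_left _ _ ?_)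
  exact (tendsto_atTop_add_const_right _ _ tendsto_id).const_mul_atTop hγ

theorem tendsto_atBot_of_le_deriv {f : ℝ → ℝ} {a γ : ℝ} (hγ : 0 < γ)
    (hf : ContinuousOn f (Iic a)) (hderiv : ∀ x ∈ Iio a, γ ≤ deriv f x) :
    Tendsto f atBot atBot := by
  have hdiff : DifferentiableOn ℝ f (interior (Iic a)) := fun x hx =>
    (differentiableAt_of_deriv_ne_zero
      (hγ.trans_le (hderiv x (by rwa [interior_Iic] at hx))).ne').differentiableWithinAt
  have hlin : ∀ᶠ x in atBot, f x ≤ f a + γ * (x - a) := by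
    filter_upwards [eventually_le_atBot a] with x hx
    have := (convex_Iic a).mul_sub_le_image_sub_of_le_deriv hf hdiff
      (fun y hy => hderiv y (by rwa [interior_Iic] at hy)) x hx a self_mem_Iic hx
    linarith
  refine tendsto_atBot_mono' _ hlin (tendsto_atBot_add_const_left _ _ ?_)
  exact (tendsto_atBot_add_const_right _ _ tendsto_id).const_mul_atBot hγ

theorem Continuous.exists_le_of_eventually_nonpos_cocompact {X : Type*} [TopologicalSpace X]
    {f : X → ℝ} (hf : Continuous f) (h : ∀ᶠ x in cocompact X, f x ≤ 0) :
    ∃ C ≥ 0, ∀ x, f x ≤ C := by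
  obtain ⟨K, hK, hKc⟩ := mem_cocompact.1 h
  obtain ⟨C, hC⟩ := hK.bddAbove_image hf.continuousOn
  refine ⟨max C 0, le_max_right _ _, fun x => ?_⟩
  by_cases hx : x ∈ K
  · exact (hC (mem_image_of_mem f hx)).trans (le_max_left _ _)
  · exact (hKc hx).trans (le_max_right _ _)

theorem half_abs_mul_one_add_abs_le_mul {a r : ℝ} (h : 0 ≤ a * r) (hr : 1 ≤ |r|) :
    1 / 2 * |a| * (1 + |r|) ≤ a * r := by
  rw [← abs_of_nonneg h, abs_mul]
  nlinarith [abs_nonneg a]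

theorem Continuous.exists_half_abs_mul_one_add_abs_le_mul_add {g : ℝ → ℝ} (hg : Continuous g)
    (htop : ∀ᶠ r in atTop, 0 ≤ g r) (hbot : ∀ᶠ r in atBot, g r ≤ 0) :
    ∃ C ≥ 0, ∀ r, 1 / 2 * |g r| * (1 + |r|) ≤ g r * r + C := by
  have hF : Continuous fun r => 1 / 2 * |g r| * (1 + |r|) - g r * r := by fun_prop
  have hsign : ∀ᶠ r in cocompact ℝ, 0 ≤ g r * r ∧ 1 ≤ |r| := by
    rw [cocompact_eq_atBot_atTop, eventually_sup]
    constructor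
    · filter_upwards [hbot, eventually_le_atBot (-1)] with r hgr hr
      exact ⟨mul_nonneg_of_nonpos_of_nonpos hgr (by linarith),
        (le_neg.2 hr).trans (neg_le_abs r)⟩
    · filter_upwards [htop, eventually_ge_atTop 1] with r hgr hr
      exact ⟨mul_nonneg hgr (by linarith), hr.trans (le_abs_self r)⟩
  obtain ⟨C, hC, hFC⟩ := hF.exists_le_of_eventually_nonpos_cocompact <| hsign.mono fun r hr =>
    sub_nonpos.2 (half_abs_mul_one_add_abs_le_mul hr.1 hr.2)
  exact ⟨C, hC, fun r => by linarith [hFC r]⟩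

theorem coercivity_estimate_general (g : ℝ → ℝ) (hg : ContDiff ℝ 1 g)
    (γ R : ℝ) (hγ : 0 < γ)
    (hderiv : ∀ r : ℝ, R ≤ |r| → γ ≤ deriv g r) :
    ∃ cstar > 0, ∃ C ≥ 0, ∀ r : ℝ,
      g r * r ≥ cstar / 2 * |g r| * (1 + |r|) - C := by
  have htop : Tendsto g atTop atTop :=
    tendsto_atTop_of_le_deriv hγ hg.continuous.continuousOn fun x hx =>
      hderiv x (hx.le.trans (le_abs_self x))
  have hbot : Tendsto g atBot atBot :=
    tendsto_atBot_of_le_deriv (a := -R) hγ hg.continuous.continuousOn fun x hx =>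
      hderiv x ((le_neg.1 hx.le).trans (neg_le_abs x))
  obtain ⟨C, hC, hbound⟩ := hg.continuous.exists_half_abs_mul_one_add_abs_le_mul_add
    (htop.eventually_ge_atTop 0) (hbot.eventually_le_atBot 0)
  exact ⟨1, one_pos, C, hC, fun r => by linarith [hbound r]⟩

/-- The coercivity estimate (3.23) of the paper: if `g` is `C¹` and `g' ≥ γ > 0`
outside the compact interval `[-R, R]`, then there exist `c⋆ > 0` and `C ≥ 0` with
`g(r)·r ≥ (c⋆/2)·|g(r)|·(1 + |r|) − C` for all `r`. -/
theorem coercivity_estimate (g : ℝ → ℝ) (hg : ContDiff ℝ 1 g)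
    (γ R : ℝ) (hγ : 0 < γ) (hR : 0 < R)
    (hderiv : ∀ r : ℝ, R ≤ |r| → γ ≤ deriv g r) :
    ∃ cstar > 0, ∃ C ≥ 0, ∀ r : ℝ,
      g r * r ≥ cstar / 2 * |g r| * (1 + |r|) - C :=
  coercivity_estimate_general g hg γ R hγ hderiv
end

section
/- Let g : ℝ → ℝ be continuously differentiable and suppose there exist γ > 0 and R > 0 such that g'(r) ≥ γ whenever |r| ≥ R. Let G(r) = ∫₀^r g(ζ) dζ. Then there exists a constant c₁ ≥ 0 such that |G(r)| ≤ |g(r)|·(1 + |r|) + c₁ for all r ∈ ℝ. -/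
/-! Beyond `R` the derivative bound makes `g` increasing with at least linear growth, so from
some `T ≥ 0` on, `g` is nonnegative and increasing. For `r ≥ T` the integral of `g` over `[T, r]`
is then at most `g r * (r - T)`, while the primitive is bounded on the compact interval `[0, T]`.
The case `r < 0` reduces to this one through the reflection `x ↦ -g (-x)`, which satisfies the
same hypotheses and whose primitive at `-r` is that of `g` at `r`. -/

open Set intervalIntegral

lemma monotoneOn_sub_mul_of_le_deriv {f : ℝ → ℝ} (hf : Differentiable ℝ f) {γ a : ℝ}
    (hderiv : ∀ x, a ≤ x → γ ≤ deriv f x) : MonotoneOn (fun x => f x - γ * x) (Ici a) := by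
  have hfc := hf.continuous
  refine monotoneOn_of_deriv_nonneg (convex_Ici a) (by fun_prop) (by fun_prop) fun x hx => ?_
  rw [interior_Ici] at hx
  have hx' : deriv (fun x => f x - γ * x) x = deriv f x - γ := by
    simpa using ((hf x).hasDerivAt.fun_sub ((hasDerivAt_id x).const_mul γ)).deriv
  linarith [hderiv x (le_of_lt hx)]

lemma abs_integral_le_of_monotoneOn {f : ℝ → ℝ} {a b : ℝ} (hab : a ≤ b)
    (hf : MonotoneOn f (Icc a b)) (ha : 0 ≤ f a) : |∫ x in a..b, f x| ≤ f b * (b - a) := by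
  have hbound : ∀ x ∈ uIoc a b, ‖f x‖ ≤ f b := by
    rw [uIoc_of_le hab]
    rintro x ⟨hax, hxb⟩
    have hx : x ∈ Icc a b := ⟨hax.le, hxb⟩
    rw [Real.norm_eq_abs, abs_of_nonneg (ha.trans (hf ⟨le_rfl, hab⟩ hx hax.le))]
    exact hf hx ⟨hab, le_rfl⟩ hxb
  simpa [abs_of_nonneg (sub_nonneg.2 hab)] using norm_integral_le_of_norm_le_const hbound

lemma exists_abs_integral_le_of_monotoneOn_Ici {f : ℝ → ℝ} (hf : Continuous f) {T : ℝ}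
    (hT : 0 ≤ T) (hmono : MonotoneOn f (Ici T)) (hfT : 0 ≤ f T) :
    ∃ c ≥ (0 : ℝ), ∀ r, 0 ≤ r → |∫ x in (0 : ℝ)..r, f x| ≤ |f r| * (1 + r) + c := by
  have hprim :=
    continuous_primitive (μ := MeasureTheory.volume) (fun a b => hf.intervalIntegrable a b) 0
  obtain ⟨C, hC⟩ := isCompact_Icc.exists_bound_of_continuousOn (s := Icc 0 T) hprim.continuousOn
  simp only [Real.norm_eq_abs] at hC
  refine ⟨max C 0, le_max_right _ _, fun r hr => ?_⟩
  have hrhs : 0 ≤ |f r| * (1 + r) := by positivity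
  rcases le_total r T with hrT | hTr
  · linarith [hC r ⟨hr, hrT⟩, le_max_left C 0]
  have hsplit := integral_add_adjacent_intervals
    (hf.intervalIntegrable (μ := MeasureTheory.volume) 0 T) (hf.intervalIntegrable T r)
  have htail := abs_integral_le_of_monotoneOn hTr (hmono.mono Icc_subset_Ici_self) hfT
  have hfr : f r * (r - T) ≤ |f r| * (1 + r) :=
    mul_le_mul (le_abs_self _) (by linarith) (by linarith) (abs_nonneg _)
  calc |∫ x in (0 : ℝ)..r, f x|
      ≤ |∫ x in (0 : ℝ)..T, f x| + |∫ x in T..r, f x| := by rw [← hsplit]; exact abs_add_le _ _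
    _ ≤ max C 0 + |f r| * (1 + r) := by
        gcongr
        · exact (hC T ⟨hT, le_rfl⟩).trans (le_max_left _ _)
        · exact htail.trans hfr
    _ = _ := add_comm _ _

lemma exists_nonneg_monotoneOn_Ici_of_le_deriv {f : ℝ → ℝ} (hf : Differentiable ℝ f) {γ R : ℝ}
    (hγ : 0 < γ) (hderiv : ∀ x, R ≤ x → γ ≤ deriv f x) :
    ∃ T ≥ (0 : ℝ), MonotoneOn f (Ici T) ∧ 0 ≤ f T := by
  have hlin := monotoneOn_sub_mul_of_le_deriv hf hderiv
  have hmono : MonotoneOn f (Ici R) := fun x hx y hy hxy => by nlinarith [hlin hx hy hxy]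
  set a := max R 0
  set T := a + |f a| / γ
  have hRa : R ≤ a := le_max_left R 0
  have haT : a ≤ T := le_add_of_nonneg_right (by positivity)
  refine ⟨T, (le_max_right R 0).trans haT, hmono.mono (Ici_subset_Ici.2 (hRa.trans haT)), ?_⟩
  have hgrowth := hlin hRa (hRa.trans haT) haT
  have hstep : γ * (T - a) = |f a| := by
    simp only [T, add_sub_cancel_left, mul_div_cancel₀ _ hγ.ne']
  nlinarith [neg_abs_le (f a)]

lemma exists_abs_integral_le_of_le_deriv {f : ℝ → ℝ} (hf : Differentiable ℝ f) {γ R : ℝ}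
    (hγ : 0 < γ) (hderiv : ∀ x, R ≤ x → γ ≤ deriv f x) :
    ∃ c ≥ (0 : ℝ), ∀ r, 0 ≤ r → |∫ x in (0 : ℝ)..r, f x| ≤ |f r| * (1 + r) + c := by
  obtain ⟨T, hT, hmono, hfT⟩ := exists_nonneg_monotoneOn_Ici_of_le_deriv hf hγ hderiv
  exact exists_abs_integral_le_of_monotoneOn_Ici hf.continuous hT hmono hfT

theorem primitive_estimate_general (g : ℝ → ℝ) (hg : ContDiff ℝ 1 g)
    (γ R : ℝ) (hγ : 0 < γ)
    (hderiv : ∀ r : ℝ, R ≤ |r| → γ ≤ deriv g r) :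
    ∃ c₁ ≥ (0 : ℝ), ∀ r : ℝ,
      |∫ ζ in (0 : ℝ)..r, g ζ| ≤ |g r| * (1 + |r|) + c₁ := by
  have hgd := hg.differentiable one_ne_zero
  obtain ⟨cpos, hcpos, hright⟩ := exists_abs_integral_le_of_le_deriv hgd hγ
    fun x hx => hderiv x (hx.trans (le_abs_self x))
  obtain ⟨cneg, -, hleft⟩ := exists_abs_integral_le_of_le_deriv (f := fun x => -g (-x))
    (by fun_prop) hγ fun x hx => by
      rw [deriv.fun_neg, deriv_comp_neg, neg_neg]
      exact hderiv (-x) (hx.trans ((le_abs_self x).trans_eq (abs_neg x).symm))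
  refine ⟨max cpos cneg, le_max_of_le_left hcpos, fun r => ?_⟩
  rcases le_total 0 r with hr | hr
  · rw [abs_of_nonneg hr]
    linarith [hright r hr, le_max_left cpos cneg]
  · have h := hleft (-r) (neg_nonneg.2 hr)
    have hreflect : ∫ x in (0 : ℝ)..-r, -g (-x) = ∫ x in (0 : ℝ)..r, g x := by
      rw [integral_neg, integral_comp_neg, neg_zero, neg_neg, integral_symm, neg_neg]
    rw [hreflect, neg_neg, abs_neg] at h
    rw [abs_of_nonpos hr]
    linarith [le_max_right cpos cneg]

/-- Estimate (3.25) of the paper: if `g` is `C¹` and `g' ≥ γ > 0` outside the compact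
interval `[-R, R]`, then the primitive `G(r) = ∫₀^r g` satisfies
`|G(r)| ≤ |g(r)|·(1 + |r|) + c₁` for some constant `c₁ ≥ 0` and all `r`. -/
theorem primitive_estimate (g : ℝ → ℝ) (hg : ContDiff ℝ 1 g)
    (γ R : ℝ) (hγ : 0 < γ) (hR : 0 < R)
    (hderiv : ∀ r : ℝ, R ≤ |r| → γ ≤ deriv g r) :
    ∃ c₁ ≥ (0 : ℝ), ∀ r : ℝ,
      |∫ ζ in (0 : ℝ)..r, g ζ| ≤ |g r| * (1 + |r|) + c₁ :=
  primitive_estimate_general g hg γ R hγ hderiv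
end
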